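/- Let X be a compact Hausdorff space, A a unital C(X)-algebra (structure map θ_A) which is a continuous field of C*-algebras over X, D a unital C(X)-algebra (structure map θ_D), and π : D → A a unital *-homomorphism satisfying π(θ_D(f)d) = θ_A(f)π(d) for all f ∈ C(X) and d ∈ D. Assume that π is a continuous field of faithful representations, i.e. for every x ∈ X and every d ∈ D one has ‖d_x‖ = sup{ ‖(π(d)·a)_x‖ : a ∈ A, ‖a‖ ≤ 1 }, where the fiber seminorms on the left and right are computed in D and in A respectively. Then for every d ∈ D the function x ↦ sup{ ‖(π(d)·a)_x‖ : a ∈ A, ‖a‖ ≤ 1 } is lower semicontinuous, and consequently D is a continuous field of C*-algebras over X, i.e. x ↦ ‖d_x‖ is continuous for every d ∈ D. -/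

import Mathlib

/-- The fiber ideal `I_x(A)` of a `C(X)`-algebra `A` with structure map `θ` at a point `x`:
the closed linear span of `{θ(f) * a : f ∈ C(X), f x = 0, a ∈ A}`. -/
def fiberIdeal {X : Type*} [TopologicalSpace X] {A : Type*} [NormedRing A] [StarRing A]
    [NormedAlgebra ℂ A] (θ : C(X, ℂ) →⋆ₐ[ℂ] A) (x : X) : Set A :=
  closure (Submodule.span ℂ {y : A | ∃ (f : C(X, ℂ)) (b : A), f x = 0 ∧ y = θ f * b} : Set A)

/-- The fiber seminorm `‖a_x‖ := dist(a, I_x(A))`. -/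
noncomputable def fiberNorm {X : Type*} [TopologicalSpace X] {A : Type*} [NormedRing A]
    [StarRing A] [NormedAlgebra ℂ A] (θ : C(X, ℂ) →⋆ₐ[ℂ] A) (x : X) (a : A) : ℝ :=
  Metric.infDist a (fiberIdeal θ x)

/-! The fiber seminorm `‖a_x‖` is the quotient norm of `a` modulo the (non-closed) span `J_x` of
the elements `θ(f) b` with `f x = 0`, so it is subadditive and homogeneous. A generator
`θ(f) b` of `J_x` has fiber norm at most `|f(y)| ‖b‖` at `y`, which tends to `0` as `y → x`; hence
`y ↦ ‖i_y‖` tends to `0` at `x` for every `i ∈ J_x`, and approximating `a` by `a - i` shows that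
`x ↦ ‖a_x‖` is upper semicontinuous in any `C(X)`-algebra. A supremum of continuous functions is
lower semicontinuous, so by faithfulness of `π` the function `x ↦ ‖d_x‖` is both. -/

open Filter Topology Metric

section FiberNorm

variable {X : Type*} [TopologicalSpace X] {A : Type*} [NormedRing A] [StarRing A]
  [NormedAlgebra ℂ A] (θ : C(X, ℂ) →⋆ₐ[ℂ] A)

noncomputable def fiberSpan (x : X) : Submodule ℂ A :=
  Submodule.span ℂ {y : A | ∃ (f : C(X, ℂ)) (b : A), f x = 0 ∧ y = θ f * b}

theorem fiberNorm_eq_infDist_fiberSpan (x : X) (a : A) :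
    fiberNorm θ x a = infDist a (fiberSpan θ x) :=
  infDist_closure

theorem fiberNorm_eq_norm_mk (x : X) (a : A) :
    fiberNorm θ x a = ‖(Submodule.Quotient.mk a : A ⧸ fiberSpan θ x)‖ := by
  rw [fiberNorm_eq_infDist_fiberSpan]
  exact (QuotientAddGroup.norm_mk (S := (fiberSpan θ x).toAddSubgroup) a).symm

theorem fiberNorm_nonneg (x : X) (a : A) : 0 ≤ fiberNorm θ x a := infDist_nonneg

theorem fiberNorm_le_norm (x : X) (a : A) : fiberNorm θ x a ≤ ‖a‖ :=
  (fiberNorm_eq_norm_mk θ x a).trans_le (Submodule.Quotient.norm_mk_le _ a)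

theorem fiberNorm_zero (x : X) : fiberNorm θ x 0 = 0 := by
  simp [fiberNorm_eq_norm_mk]

theorem fiberNorm_add_le (x : X) (a b : A) :
    fiberNorm θ x (a + b) ≤ fiberNorm θ x a + fiberNorm θ x b := by
  simpa only [fiberNorm_eq_norm_mk, Submodule.Quotient.mk_add] using norm_add_le _ _

theorem fiberNorm_smul (x : X) (c : ℂ) (a : A) :
    fiberNorm θ x (c • a) = ‖c‖ * fiberNorm θ x a := by
  simp only [fiberNorm_eq_norm_mk, Submodule.Quotient.mk_smul, norm_smul]

theorem fiberNorm_mul_le (f : C(X, ℂ)) (b : A) (y : X) :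
    fiberNorm θ y (θ f * b) ≤ ‖f y‖ * ‖b‖ := by
  have hmk : (Submodule.Quotient.mk (θ f * b) : A ⧸ fiberSpan θ y) =
      Submodule.Quotient.mk (f y • b) :=
    (Submodule.Quotient.eq _).2 <| Submodule.subset_span
      ⟨f - f y • 1, b, by simp, by simp [sub_mul]⟩
  rw [fiberNorm_eq_norm_mk, hmk, ← norm_smul]
  exact Submodule.Quotient.norm_mk_le _ _

theorem tendsto_fiberNorm_of_mem_fiberSpan {x : X} {i : A} (hi : i ∈ fiberSpan θ x) :
    Tendsto (fun y => fiberNorm θ y i) (𝓝 x) (𝓝 0) := by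
  induction hi using Submodule.span_induction with
  | mem _ hgen =>
    obtain ⟨f, b, hfx, rfl⟩ := hgen
    have hlim : Tendsto (fun y => ‖f y‖ * ‖b‖) (𝓝 x) (𝓝 0) := by
      simpa [hfx] using (f.continuous.tendsto x).norm.mul_const ‖b‖
    exact squeeze_zero (fiberNorm_nonneg θ · _) (fiberNorm_mul_le θ f b) hlim
  | zero => simpa only [fiberNorm_zero] using tendsto_const_nhds
  | add a b _ _ ha hb =>
    exact squeeze_zero (fiberNorm_nonneg θ · _) (fiberNorm_add_le θ · a b)
      (by simpa using ha.add hb)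
  | smul c a _ ha =>
    simpa only [fiberNorm_smul, mul_zero] using ha.const_mul ‖c‖

theorem upperSemicontinuous_fiberNorm (a : A) :
    UpperSemicontinuous fun x : X => fiberNorm θ x a := by
  intro x c (hc : fiberNorm θ x a < c)
  rw [fiberNorm_eq_infDist_fiberSpan] at hc
  obtain ⟨i, hi, hai⟩ := (infDist_lt_iff ⟨0, Submodule.zero_mem _⟩).1 hc
  filter_upwards [(tendsto_fiberNorm_of_mem_fiberSpan θ hi).eventually
    (gt_mem_nhds (sub_pos.2 hai))] with y hy
  calc fiberNorm θ y a ≤ fiberNorm θ y i + dist a i := infDist_le_infDist_add_dist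
    _ < c := by linarith

theorem lowerSemicontinuous_iSup_fiberNorm_mul
    (hθ : ∀ a : A, LowerSemicontinuous fun x : X => fiberNorm θ x a) (b : A) :
    LowerSemicontinuous fun x : X => ⨆ a : {a : A // ‖a‖ ≤ 1}, fiberNorm θ x (b * a) := by
  refine lowerSemicontinuous_ciSup (fun x => ⟨‖b‖, Set.forall_mem_range.2 fun a => ?_⟩)
    fun a => hθ _
  calc fiberNorm θ x (b * a) ≤ ‖b * a‖ := fiberNorm_le_norm θ x _
    _ ≤ ‖b‖ * ‖(a : A)‖ := norm_mul_le _ _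
    _ ≤ ‖b‖ := mul_le_of_le_one_right (norm_nonneg _) a.2

end FiberNorm

theorem continuousField_of_faithful_field_of_reps_general
    {X : Type*} [TopologicalSpace X]
    {A : Type*} [NormedRing A] [StarRing A]
    [NormedAlgebra ℂ A]
    {D : Type*} [NormedRing D] [StarRing D]
    [NormedAlgebra ℂ D]
    (θA : C(X, ℂ) →⋆ₐ[ℂ] A)
    (θD : C(X, ℂ) →⋆ₐ[ℂ] D)
    (hA : ∀ a : A, Continuous fun x : X => fiberNorm θA x a)
    (π : D →⋆ₐ[ℂ] A)
    (hfaith : ∀ (x : X) (d : D),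
      fiberNorm θD x d = ⨆ a : {a : A // ‖a‖ ≤ 1}, fiberNorm θA x (π d * (a : A))) :
    (∀ d : D, LowerSemicontinuous
        fun x : X => ⨆ a : {a : A // ‖a‖ ≤ 1}, fiberNorm θA x (π d * (a : A))) ∧
      ∀ d : D, Continuous fun x : X => fiberNorm θD x d := by
  have lsc : ∀ d : D, LowerSemicontinuous
      fun x : X => ⨆ a : {a : A // ‖a‖ ≤ 1}, fiberNorm θA x (π d * (a : A)) := fun d =>
    lowerSemicontinuous_iSup_fiberNorm_mul θA (fun a => (hA a).lowerSemicontinuous) (π d)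
  refine ⟨lsc, fun d => continuous_iff_lower_upperSemicontinuous.2
    ⟨?_, upperSemicontinuous_fiberNorm θD d⟩⟩
  simpa only [hfaith] using lsc d

/-- Let `A` be a unital `C(X)`-algebra (structure map `θA`) which is a continuous field over the
compact Hausdorff space `X`, `D` a unital `C(X)`-algebra (structure map `θD`), and
`π : D → A` a unital `C(X)`-linear `*`-homomorphism which is a continuous field of faithful
representations, i.e. `‖d_x‖ = sup { ‖(π(d) a)_x‖ : ‖a‖ ≤ 1 }` for all `x, d`. Then for each
`d ∈ D` the function `x ↦ sup { ‖(π(d) a)_x‖ : ‖a‖ ≤ 1 }` is lower semicontinuous and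
`x ↦ ‖d_x‖` is continuous, i.e. `D` is a continuous field of C*-algebras over `X`. -/
theorem continuousField_of_faithful_field_of_reps
    {X : Type*} [TopologicalSpace X] [CompactSpace X] [T2Space X]
    {A : Type*} [NormedRing A] [StarRing A] [CStarRing A] [CompleteSpace A]
    [NormedAlgebra ℂ A] [StarModule ℂ A]
    {D : Type*} [NormedRing D] [StarRing D] [CStarRing D] [CompleteSpace D]
    [NormedAlgebra ℂ D] [StarModule ℂ D]
    (θA : C(X, ℂ) →⋆ₐ[ℂ] A) (hθA : ∀ (f : C(X, ℂ)) (a : A), θA f * a = a * θA f)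
    (θD : C(X, ℂ) →⋆ₐ[ℂ] D) (hθD : ∀ (f : C(X, ℂ)) (d : D), θD f * d = d * θD f)
    (hA : ∀ a : A, Continuous fun x : X => fiberNorm θA x a)
    (π : D →⋆ₐ[ℂ] A) (hπ : ∀ (f : C(X, ℂ)) (d : D), π (θD f * d) = θA f * π d)
    (hfaith : ∀ (x : X) (d : D),
      fiberNorm θD x d = ⨆ a : {a : A // ‖a‖ ≤ 1}, fiberNorm θA x (π d * (a : A))) :
    (∀ d : D, LowerSemicontinuous
        fun x : X => ⨆ a : {a : A // ‖a‖ ≤ 1}, fiberNorm θA x (π d * (a : A))) ∧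
      ∀ d : D, Continuous fun x : X => fiberNorm θD x d :=
  continuousField_of_faithful_field_of_reps_general θA θD hA π hfaith
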